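/- The symmetric tridiagonal (K+1)×(K+1) matrix -Y with diagonal entries (2 + 1/α, 2, ..., 2, 2 + 1/α) and off-diagonal entries -√2 in positions (1,2),(2,1),(K,K+1),(K+1,K) and -1 elsewhere on the sub/super diagonal is positive definite for any α > 0. -/

import Mathlib

/-!
Write `D = diag(√2, 1, …, 1, √2)` and let `L` be the Laplacian of the path graph on `K + 1`
vertices, whose diagonal is `(1, 2, …, 2, 1)`. Then
`-Y = D (L + (2α)⁻¹ (E₁₁ + E_{K+1,K+1})) D`. The Laplacian is positive semidefinite and, the
path being connected, its quadratic form vanishes only on constant vectors; the end weight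
`(2α)⁻¹ > 0` rules these out, so the middle factor is positive definite, and conjugation by the
invertible `D` preserves this. The factorisation needs `K ≥ 2`: otherwise the two ends are
adjacent and their entry would pick up the factor `√2` twice.
-/

/-- The (K+1)×(K+1) symmetric tridiagonal matrix -Y: diagonal entries
(2 + 1/α, 2, ..., 2, 2 + 1/α), off-diagonal entries -√2 at the two corner
positions and -1 elsewhere on the sub/super diagonal. -/
noncomputable def negY (K : ℕ) (α : ℝ) : Matrix (Fin (K + 1)) (Fin (K + 1)) ℝ :=
  Matrix.of fun i j =>
    if (i : ℕ) = (j : ℕ) then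
      (if (i : ℕ) = 0 ∨ (i : ℕ) = K then 2 + 1 / α else 2)
    else if (i : ℕ) + 1 = (j : ℕ) ∨ (j : ℕ) + 1 = (i : ℕ) then
      (if (i : ℕ) = 0 ∨ (j : ℕ) = 0 ∨ (i : ℕ) = K ∨ (j : ℕ) = K then -Real.sqrt 2 else -1)
    else 0

open Matrix SimpleGraph

instance SimpleGraph.decidableRelPathGraphAdj (n : ℕ) : DecidableRel (pathGraph n).Adj :=
  fun _ _ => decidable_of_iff' _ pathGraph_adj

theorem SimpleGraph.pathGraph_degree {n : ℕ} (i : Fin n) :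
    (pathGraph n).degree i =
      (if (i : ℕ) = 0 then 0 else 1) + (if (i : ℕ) + 1 = n then 0 else 1) := by
  have hsplit : ∀ j : Fin n, (if (pathGraph n).Adj i j then 1 else 0) =
      (if (j : ℕ) + 1 = i then 1 else 0) + (if (i : ℕ) + 1 = j then 1 else 0) := by
    intro j; simp only [pathGraph_adj]; split_ifs <;> omega
  rw [← Nat.cast_id ((pathGraph n).degree i), degree_eq_sum_if_adj,
    Finset.sum_congr rfl fun j _ => hsplit j, Finset.sum_add_distrib,
    Fin.sum_univ_eq_sum_range (fun j => if j + 1 = (i : ℕ) then 1 else 0),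
    Fin.sum_univ_eq_sum_range (fun j => if (i : ℕ) + 1 = j then 1 else 0), Finset.sum_ite_eq]
  congr 1
  · obtain ⟨i, hi⟩ := i
    cases i with
    | zero => simp
    | succ i => simp [Finset.sum_ite_eq', hi.trans' (Nat.lt_succ_self i)]
  · simp only [Finset.mem_range]; split_ifs <;> omega

theorem SimpleGraph.Connected.posDef_lapMatrix_add_diagonal {V : Type*} [Fintype V] [DecidableEq V]
    {G : SimpleGraph V} [DecidableRel G.Adj] (hG : G.Connected) {w : V → ℝ} (hw : 0 ≤ w) {v : V}
    (hv : 0 < w v) : (G.lapMatrix ℝ + diagonal w).PosDef := by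
  refine .of_dotProduct_mulVec_pos ((isHermitian_lapMatrix ℝ G).add
    (isHermitian_diagonal_of_self_adjoint _ (funext fun _ => star_trivial _))) fun x hx => ?_
  have hL := (posSemidef_lapMatrix ℝ G).dotProduct_mulVec_nonneg x
  rw [star_trivial] at hL ⊢
  have hdiag : x ⬝ᵥ diagonal w *ᵥ x = ∑ i, w i * x i ^ 2 := by
    simp only [dotProduct, mulVec_diagonal]
    exact Finset.sum_congr rfl fun i _ => by ring
  have hterm (i : V) : 0 ≤ w i * x i ^ 2 := mul_nonneg (hw i) (sq_nonneg _)
  have hW : 0 ≤ ∑ i, w i * x i ^ 2 := Finset.sum_nonneg fun i _ => hterm i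
  rw [add_mulVec, dotProduct_add, hdiag]
  refine lt_of_le_of_ne (add_nonneg hL hW) fun hsum => hx ?_
  have hxv : x v = 0 := by
    have hW0 : ∑ i, w i * x i ^ 2 = 0 := by linarith
    simpa [hv.ne'] using (Finset.sum_eq_zero_iff_of_nonneg fun i _ => hterm i).mp hW0 v
      (Finset.mem_univ v)
  have hconst : ∀ i, x i = x v := fun i =>
    (lapMatrix_toLinearMap₂'_apply'_eq_zero_iff_forall_reachable G x).mp
      (by rw [toLinearMap₂'_apply']; linarith) i v (hG.preconnected i v)
  exact funext fun i => (hconst i).trans hxv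

theorem Matrix.PosDef.diagonal_star_mul_mul_diagonal {𝕜 n : Type*} [Field 𝕜] [PartialOrder 𝕜]
    [StarRing 𝕜] [Fintype n] [DecidableEq n] {A : Matrix n n 𝕜} (hA : A.PosDef) {d : n → 𝕜}
    (hd : ∀ i, d i ≠ 0) : (diagonal (star d) * A * diagonal d).PosDef := by
  have hinj : Function.Injective (diagonal d).mulVec :=
    mulVec_injective_iff_isUnit.mpr <|
      isUnit_diagonal.mpr <| Pi.isUnit_iff.mpr fun i => (hd i).isUnit
  simpa [diagonal_conjTranspose] using hA.conjTranspose_mul_mul_same hinj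

theorem negY_eq_diagonal_mul_mul_diagonal {K : ℕ} (hK : 2 ≤ K) (α : ℝ) :
    negY K α =
      diagonal (fun i : Fin (K + 1) => if (i : ℕ) = 0 ∨ (i : ℕ) = K then √2 else 1) *
        ((pathGraph (K + 1)).lapMatrix ℝ +
          diagonal (fun i : Fin (K + 1) => if (i : ℕ) = 0 ∨ (i : ℕ) = K then (2 * α)⁻¹ else 0)) *
        diagonal (fun i : Fin (K + 1) => if (i : ℕ) = 0 ∨ (i : ℕ) = K then √2 else 1) := by
  ext i j
  have hi := i.isLt
  have hj := j.isLt
  have h2 : √2 * √2 = 2 := Real.mul_self_sqrt zero_le_two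
  simp only [negY, of_apply, diagonal_mul, mul_diagonal, Matrix.add_apply, lapMatrix,
    Matrix.sub_apply, degMatrix, diagonal_apply, adjMatrix_apply, pathGraph_adj, pathGraph_degree,
    Fin.ext_iff]
  split_ifs <;> first
    | omega
    | (push_cast; ring1)
    | (push_cast; linear_combination -(1 + (2 * α)⁻¹) * h2)

/-- The matrix -Y is positive definite for any α > 0. -/
theorem negY_posDef (K : ℕ) (hK : 2 ≤ K) (α : ℝ) (hα : 0 < α) :
    (negY K α).PosDef := by
  have hM := (pathGraph_connected K).posDef_lapMatrix_add_diagonal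
    (w := fun i => if (i : ℕ) = 0 ∨ (i : ℕ) = K then (2 * α)⁻¹ else 0)
    (fun i => by dsimp only; split_ifs <;> positivity) (v := 0) (by simp [hα])
  have hD := hM.diagonal_star_mul_mul_diagonal
    (d := fun i => if (i : ℕ) = 0 ∨ (i : ℕ) = K then √2 else 1)
    (fun i => by split_ifs <;> positivity)
  rw [star_trivial] at hD
  rwa [negY_eq_diagonal_mul_mul_diagonal hK]
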